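/- arXiv:2411.12696 — 8 statements merged into one kernel-verified Lean document; each statement's English description precedes it below -/
import Mathlib

section
/- An allocation A is weighted-envy-freeable (WEF-able) — i.e., there exists a nonnegative subsidy vector s such that (v_i(A_i)+s_i)/w_i ≥ (v_i(A_j)+s_j)/w_j for all agents i,j — if and only if the weighted envy graph G_{A,w} contains no directed cycle of positive total cost, where the cost of edge (i,j) is v_i(A_j)/w_j - v_i(A_i)/w_i. -/
/-- Sum of edge costs along the consecutive pairs of a list (a directed path). -/
noncomputable def pathCost {n : ℕ} (c : Fin n → Fin n → ℝ) (p : List (Fin n)) : ℝ :=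
  ((p.zip p.tail).map fun q => c q.1 q.2).sum

/-- Sum of edge costs along a cycle `i₁,…,i_r,i₁`. -/
noncomputable def cycleCost {n : ℕ} (c : Fin n → Fin n → ℝ) (p : List (Fin n)) : ℝ :=
  ((p.zip (p.rotate 1)).map fun q => c q.1 q.2).sum

/-- Weighted envy edge cost without subsidies. -/
noncomputable def envyCost {n : ℕ} (v : Fin n → Fin n → ℝ) (w : Fin n → ℝ) (i j : Fin n) : ℝ :=
  v i j / w j - v i i / w i

/-- Weighted envy edge cost with subsidy vector `s`. -/
noncomputable def envyCostS {n : ℕ} (v : Fin n → Fin n → ℝ) (w : Fin n → ℝ) (s : Fin n → ℝ)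
    (i j : Fin n) : ℝ :=
  (v i j + s j) / w j - (v i i + s i) / w i

/-- `(A,s)` is weighted-envy-free. -/
def IsWEF {n : ℕ} (v : Fin n → Fin n → ℝ) (w : Fin n → ℝ) (s : Fin n → ℝ) : Prop :=
  ∀ i j, (v i j + s j) / w j ≤ (v i i + s i) / w i

/-- The set of costs of (vertex-distinct) directed paths starting at `i`. -/
noncomputable def pathCostsFrom {n : ℕ} (c : Fin n → Fin n → ℝ) (i : Fin n) : Set ℝ :=
  {x | ∃ p : List (Fin n), p ≠ [] ∧ p.Nodup ∧ p.head? = some i ∧ pathCost c p = x}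


/-!
A subsidy vector `s` is the same thing as a potential `φ = s / w` on the agents: the envy cost with
subsidies is `envyCost v w i j - (φ i - φ j)`, and the potential difference telescopes around a
cycle. So if `(A, s)` is envy-free, every shifted edge cost is at most `0`, hence so is every
cycle cost. Conversely, if no cycle has
positive cost, let `φ i` be the largest cost of a simple path starting at `i`. Prepending the
edge `(i, j)` to a longest path from `j` gives `envyCost v w i j + φ j ≤ φ i`: if the path
already passes through `i`, it splits into a cycle through `i`, of cost at most `0`, and a simple
path from `i`. Then `s i = w i * φ i` is an envy-free subsidy, nonnegative because the trivial
path `[i]` has cost `0`.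
-/

section Costs

variable {n : ℕ} (c : Fin n → Fin n → ℝ)

theorem cycleCost_add_potential (g : Fin n → ℝ) (p : List (Fin n)) :
    cycleCost (fun i j => c i j + (g i - g j)) p = cycleCost c p := by
  have hlen : p.length = (p.rotate 1).length := (List.length_rotate p 1).symm
  have htelescope : ((p.zip (p.rotate 1)).map fun q => g q.1 - g q.2).sum = 0 := by
    rw [← Multiset.sum_coe, ← Multiset.map_coe, Multiset.sum_map_sub, Multiset.map_coe,
      Multiset.map_coe, Multiset.sum_coe, Multiset.sum_coe]
    change ((p.zip (p.rotate 1)).map (g ∘ Prod.fst)).sum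
      - ((p.zip (p.rotate 1)).map (g ∘ Prod.snd)).sum = 0
    rw [← List.map_map, ← List.map_map, List.map_fst_zip hlen.le, List.map_snd_zip hlen.ge,
      ((List.rotate_perm p 1).map g).sum_eq, sub_self]
  rw [cycleCost, cycleCost, List.sum_map_add, htelescope, add_zero]

theorem cycleCost_nonpos {c : Fin n → Fin n → ℝ} (hc : ∀ i j, c i j ≤ 0) (p : List (Fin n)) :
    cycleCost c p ≤ 0 := by
  have hedges : ∀ x ∈ (p.zip (p.rotate 1)).map (fun q => c q.1 q.2), x ≤ 0 := by
    simp only [List.mem_map]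
    rintro _ ⟨q, -, rfl⟩
    exact hc q.1 q.2
  simpa [cycleCost] using List.sum_le_card_nsmul _ 0 hedges

theorem pathCost_cons_of_head? {i j : Fin n} {p : List (Fin n)} (h : p.head? = some j) :
    pathCost c (i :: p) = c i j + pathCost c p := by
  obtain ⟨t, rfl⟩ := List.head?_eq_some_iff.1 h
  simp [pathCost]

theorem pathCost_append_cons (a b : List (Fin n)) (x : Fin n) :
    pathCost c (a ++ x :: b) = pathCost c (a ++ [x]) + pathCost c (x :: b) := by
  induction a with
  | nil => simp [pathCost]
  | cons y a ih =>
    cases a with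
    | nil => simp [pathCost]
    | cons z a => simp_all [pathCost_cons_of_head?, add_assoc]

theorem cycleCost_cons (x : Fin n) (l : List (Fin n)) :
    cycleCost c (x :: l) = pathCost c (x :: l ++ [x]) := by
  have hzip : (x :: l ++ [x]).zip (l ++ [x]) = (x :: l).zip (l ++ [x]) := by
    simpa using List.zip_append (l₁ := x :: l) (r₁ := [x]) (l₂ := l ++ [x]) (r₂ := []) (by simp)
  rw [cycleCost, pathCost, List.rotate_cons_succ, List.rotate_zero,
    show (x :: l ++ [x]).tail = l ++ [x] from rfl, hzip]

end Costs

section LongestPath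

variable {n : ℕ} (c : Fin n → Fin n → ℝ)

noncomputable def longestPathCost (i : Fin n) : ℝ :=
  sSup (pathCostsFrom c i)

theorem pathCostsFrom_finite (i : Fin n) : (pathCostsFrom c i).Finite := by
  refine ((List.finite_length_le (Fin n) n).image (pathCost c)).subset ?_
  rintro x ⟨p, -, hnd, -, rfl⟩
  exact ⟨p, by simpa using hnd.length_le_card, rfl⟩

theorem pathCost_le_longestPathCost {i : Fin n} {p : List (Fin n)} (hp : p ≠ []) (hnd : p.Nodup)
    (hhead : p.head? = some i) : pathCost c p ≤ longestPathCost c i :=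
  le_csSup (pathCostsFrom_finite c i).bddAbove ⟨p, hp, hnd, hhead, rfl⟩

theorem longestPathCost_nonneg (i : Fin n) : 0 ≤ longestPathCost c i := by
  simpa [pathCost] using pathCost_le_longestPathCost c (p := [i]) (by simp) (by simp) rfl

theorem longestPathCost_mem (i : Fin n) : longestPathCost c i ∈ pathCostsFrom c i :=
  Set.Nonempty.csSup_mem ⟨_, [i], by simp, by simp, rfl, rfl⟩ (pathCostsFrom_finite c i)

theorem add_longestPathCost_le (hc : ∀ p : List (Fin n), p ≠ [] → cycleCost c p ≤ 0)
    (i j : Fin n) : c i j + longestPathCost c j ≤ longestPathCost c i := by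
  obtain ⟨p, -, hnd, hhead, hp⟩ := longestPathCost_mem c j
  rw [← hp, ← pathCost_cons_of_head? c hhead]
  by_cases hi : i ∈ p
  · obtain ⟨a, b, rfl⟩ := List.append_of_mem hi
    have hcycle := cycleCost_cons c i a ▸ hc (i :: a) (List.cons_ne_nil _ _)
    have hrest := pathCost_le_longestPathCost c (List.cons_ne_nil i b) hnd.of_append_right rfl
    rw [← List.cons_append, pathCost_append_cons]
    linarith
  · exact pathCost_le_longestPathCost c (List.cons_ne_nil _ _) (List.nodup_cons.2 ⟨hi, hnd⟩) rfl

end LongestPath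

section Envy

variable {n : ℕ} {v : Fin n → Fin n → ℝ} {w : Fin n → ℝ}

theorem isWEF_iff_envyCostS_nonpos {s : Fin n → ℝ} :
    IsWEF v w s ↔ ∀ i j, envyCostS v w s i j ≤ 0 := by
  simp only [IsWEF, envyCostS, sub_nonpos]

theorem envyCost_eq_envyCostS_add (s : Fin n → ℝ) (i j : Fin n) :
    envyCost v w i j = envyCostS v w s i j + (s i / w i - s j / w j) := by
  simp only [envyCost, envyCostS, add_div]
  ring

theorem isWEF_mul_of_potential (hw : ∀ i, w i ≠ 0) {φ : Fin n → ℝ}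
    (hφ : ∀ i j, envyCost v w i j + φ j ≤ φ i) : IsWEF v w fun i => w i * φ i := by
  intro i j
  have := hφ i j
  rw [envyCost] at this
  rw [add_div, add_div, mul_div_cancel_left₀ _ (hw j), mul_div_cancel_left₀ _ (hw i)]
  linarith

end Envy

theorem wefable_iff_no_positive_cycle_general {n : ℕ} (w : Fin n → ℝ) (hw : ∀ i, 0 < w i)
    (v : Fin n → Fin n → ℝ) :
    (∃ s : Fin n → ℝ, (∀ i, 0 ≤ s i) ∧ IsWEF v w s) ↔
      (∀ c : List (Fin n), c ≠ [] → cycleCost (envyCost v w) c ≤ 0) := by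
  constructor
  · rintro ⟨s, -, hs⟩ p -
    have hshift : envyCost v w = fun i j => envyCostS v w s i j + (s i / w i - s j / w j) :=
      funext₂ (envyCost_eq_envyCostS_add s)
    rw [hshift, cycleCost_add_potential]
    exact cycleCost_nonpos (isWEF_iff_envyCostS_nonpos.1 hs) p
  · intro hc
    exact ⟨fun i => w i * longestPathCost (envyCost v w) i,
      fun i => mul_nonneg (hw i).le (longestPathCost_nonneg _ i),
      isWEF_mul_of_potential (fun i => (hw i).ne') (add_longestPathCost_le _ hc)⟩

/-- An allocation is WEF-able iff its weighted envy graph has no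
positive-cost directed cycle. -/
theorem wefable_iff_no_positive_cycle {n : ℕ} (w : Fin n → ℝ) (hw : ∀ i, 0 < w i)
    (v : Fin n → Fin n → ℝ) (hv : ∀ i j, 0 ≤ v i j) :
    (∃ s : Fin n → ℝ, (∀ i, 0 ≤ s i) ∧ IsWEF v w s) ↔
      (∀ c : List (Fin n), c ≠ [] → cycleCost (envyCost v w) c ≤ 0) :=
  wefable_iff_no_positive_cycle_general w hw v
end

section
/- The subsidy vector s*_i = w_i · ℓ_i(A) is pointwise minimal: for any WEF-able allocation A and any nonnegative subsidy vector s such that (A,s) is weighted-envy-free, s_i ≥ w_i · ℓ_i(A) for every agent i, where ℓ_i(A) is the maximum cost of a path starting at i in the weighted envy graph. -/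
/-!
Weighted envy-freeness of `(A, s)` says exactly that every edge cost of the weighted envy graph
is bounded by a potential difference: `cost(i, j) ≤ s i / w i - s j / w j`. Along a path starting
at `i` these bounds telescope, so its cost is at most `s i / w i` minus the nonnegative potential
of its last vertex. In particular `ℓ i ≤ s i / w i`.
-/

theorem pathCost_cons_cons {n : ℕ} (c : Fin n → Fin n → ℝ) (a b : Fin n) (p : List (Fin n)) :
    pathCost c (a :: b :: p) = c a b + pathCost c (b :: p) := by
  simp [pathCost]

theorem pathCost_le_sub_getLast {n : ℕ} {c : Fin n → Fin n → ℝ} {φ : Fin n → ℝ}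
    (hc : ∀ i j, c i j ≤ φ i - φ j) (a : Fin n) (p : List (Fin n)) :
    pathCost c (a :: p) ≤ φ a - φ ((a :: p).getLast (List.cons_ne_nil a p)) := by
  induction p generalizing a with
  | nil => simp [pathCost]
  | cons b p ih =>
    rw [pathCost_cons_cons, List.getLast_cons_cons]
    linarith [hc a b, ih b]

theorem le_of_mem_pathCostsFrom {n : ℕ} {c : Fin n → Fin n → ℝ} {φ : Fin n → ℝ}
    (hc : ∀ i j, c i j ≤ φ i - φ j) (hφ : ∀ i, 0 ≤ φ i) {i : Fin n} {x : ℝ}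
    (hx : x ∈ pathCostsFrom c i) : x ≤ φ i := by
  obtain ⟨_ | ⟨a, p⟩, hne, -, hhead, rfl⟩ := hx
  · exact absurd rfl hne
  · obtain rfl : a = i := by simpa using hhead
    linarith [pathCost_le_sub_getLast hc a p, hφ ((a :: p).getLast (List.cons_ne_nil a p))]

theorem IsWEF.envyCost_le_sub {n : ℕ} {v : Fin n → Fin n → ℝ} {w s : Fin n → ℝ}
    (h : IsWEF v w s) (i j : Fin n) : envyCost v w i j ≤ s i / w i - s j / w j := by
  have hij := h i j
  rw [add_div, add_div] at hij
  rw [envyCost]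
  linarith

theorem max_path_subsidy_is_minimal_general {n : ℕ} (w : Fin n → ℝ) (hw : ∀ i, 0 < w i)
    (v : Fin n → Fin n → ℝ)
    (ℓ : Fin n → ℝ) (hℓ : ∀ i, IsGreatest (pathCostsFrom (envyCost v w) i) (ℓ i))
    (s : Fin n → ℝ) (hs : ∀ i, 0 ≤ s i) (hWEF : IsWEF v w s) :
    ∀ i, w i * ℓ i ≤ s i := by
  intro i
  have hℓs : ℓ i ≤ s i / w i :=
    le_of_mem_pathCostsFrom hWEF.envyCost_le_sub (fun j => div_nonneg (hs j) (hw j).le)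
      (hℓ i).1
  rwa [le_div_iff₀ (hw i), mul_comm] at hℓs

/-- The subsidy vector `s* i = w i * ℓ i` is pointwise minimal among all
nonnegative weighted-envy-eliminating subsidy vectors. -/
theorem max_path_subsidy_is_minimal {n : ℕ} (w : Fin n → ℝ) (hw : ∀ i, 0 < w i)
    (v : Fin n → Fin n → ℝ) (hv : ∀ i j, 0 ≤ v i j)
    (ℓ : Fin n → ℝ) (hℓ : ∀ i, IsGreatest (pathCostsFrom (envyCost v w) i) (ℓ i))
    (s : Fin n → ℝ) (hs : ∀ i, 0 ≤ s i) (hWEF : IsWEF v w s) :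
    ∀ i, w i * ℓ i ≤ s i :=
  max_path_subsidy_is_minimal_general w hw v ℓ hℓ s hs hWEF
end

section
/- With two agents having weights w_1 = 1 and w_2 = 10, two items o_1, o_2 with valuations v_1(o_1)=5, v_1(o_2)=7, v_2(o_1)=10, v_2(o_2)=8, neither assignment of the two singleton bundles to the two agents is weighted-envy-freeable: under any assignment, no subsidy vector s ≥ 0 makes the allocation weighted-envy-free. -/
-- Summing the two envy constraints between `i` and `j` cancels the subsidies.
theorem IsWEF.envyCost_add_envyCost_le_zero {n : ℕ} {v : Fin n → Fin n → ℝ} {w s : Fin n → ℝ}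
    (h : IsWEF v w s) (i j : Fin n) : envyCost v w i j + envyCost v w j i ≤ 0 := by
  have hij := h i j
  have hji := h j i
  simp only [add_div] at hij hji
  unfold envyCost
  linarith

theorem Equiv.Perm.fin_two_eq_one_or_eq_swap (σ : Equiv.Perm (Fin 2)) :
    σ = 1 ∨ σ = Equiv.swap 0 1 := by
  revert σ
  decide

/-- With weights (1,10) and bundle values ![![5,7],![10,8]], neither assignment
of the two singleton bundles to the two agents is WEF-able. -/
theorem no_permutation_is_wefable :
    ∀ σ : Equiv.Perm (Fin 2),
      ¬ ∃ s : Fin 2 → ℝ, (∀ i, 0 ≤ s i) ∧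
        IsWEF (fun i j => (![![(5 : ℝ), 7], ![10, 8]]) i (σ j)) ![(1 : ℝ), 10] s := by
  rintro σ ⟨s, -, hwef⟩
  have hcycle := hwef.envyCost_add_envyCost_le_zero 0 1
  -- the 2-cycle costs 49/10 under the identity and 1/2 under the swap
  rcases σ.fin_two_eq_one_or_eq_swap with rfl | rfl <;> norm_num [envyCost] at hcycle
end

section
/- Lower bound for chosen allocations: for any weight vector with w_1 = min_i w_i, there is an instance (one item valued V by agent 1 and V−ε by all others, all other items worthless) in which every WEF-able allocation gives the item to agent 1, and the minimum total subsidy for a WEF solution is at least (W/w_1 − 1)(V−ε). -/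
theorem IsWEF.val_le_of_single_item {n : ℕ} {v : Fin n → ℝ} {w s : Fin n → ℝ} {h : Fin n}
    (hwh : 0 < w h) (hwef : IsWEF (fun i j => if j = h then v i else 0) w s) (i : Fin n) :
    v i ≤ v h := by
  rcases eq_or_ne i h with rfl | hih
  · rfl
  have envy_i := hwef i h
  have envy_h := hwef h i
  simp only [↓reduceIte, if_neg hih, zero_add] at envy_i envy_h
  have := (div_le_div_iff_of_pos_right hwh).mp (envy_i.trans envy_h)
  linarith

theorem IsWEF.mul_div_le_subsidy_of_single_item {n : ℕ} {v : Fin n → ℝ} {w s : Fin n → ℝ}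
    {h i : Fin n} (hwh : 0 ≤ w h) (hwi : 0 < w i) (hsh : 0 ≤ s h)
    (hwef : IsWEF (fun i j => if j = h then v i else 0) w s) (hih : i ≠ h) :
    w i * v i / w h ≤ s i := by
  have envy := hwef i h
  simp only [↓reduceIte, if_neg hih, zero_add] at envy
  have : v i / w h ≤ s i / w i :=
    (div_le_div_of_nonneg_right (le_add_of_nonneg_right hsh) hwh).trans envy
  rw [mul_div_assoc]
  exact (le_div_iff₀' hwi).mp this

theorem IsWEF.sum_mul_div_le_sum_subsidy_of_single_item {n : ℕ} {v : Fin n → ℝ}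
    {w s : Fin n → ℝ} {h : Fin n} (hw : ∀ i, 0 < w i) (hs : ∀ i, 0 ≤ s i)
    (hwef : IsWEF (fun i j => if j = h then v i else 0) w s) :
    ∑ i ∈ Finset.univ.erase h, w i * v i / w h ≤ ∑ i, s i :=
  calc ∑ i ∈ Finset.univ.erase h, w i * v i / w h
      ≤ ∑ i ∈ Finset.univ.erase h, s i := Finset.sum_le_sum fun i hi =>
        hwef.mul_div_le_subsidy_of_single_item (hw h).le (hw i) (hs h) (Finset.ne_of_mem_erase hi)
    _ ≤ ∑ i, s i := Finset.sum_le_sum_of_subset_of_nonneg (Finset.erase_subset _ _)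
        fun i _ _ => hs i

theorem chosen_allocation_subsidy_lower_bound_general {n : ℕ}
    (w : Fin (n + 2) → ℝ) (hw : ∀ i, 0 < w i)
    (V ε : ℝ) (hε : 0 < ε)
    (val : Fin (n + 2) → ℝ) (hval : ∀ i, val i = if i = 0 then V else V - ε) :
    (∀ h : Fin (n + 2),
      (∃ s : Fin (n + 2) → ℝ, (∀ i, 0 ≤ s i) ∧
        IsWEF (fun i j => if j = h then val i else 0) w s) → h = 0) ∧
    (∀ s : Fin (n + 2) → ℝ, (∀ i, 0 ≤ s i) →
      IsWEF (fun i j => if j = (0 : Fin (n + 2)) then val i else 0) w s →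
      ((∑ i, w i) / w 0 - 1) * (V - ε) ≤ ∑ i, s i) := by
  constructor
  · rintro h ⟨s, -, hwef⟩
    by_contra hh
    have := hwef.val_le_of_single_item (hw h) 0
    simp only [hval, ↓reduceIte, if_neg hh] at this
    linarith
  · intro s hs hwef
    have others : ∑ i ∈ Finset.univ.erase 0, w i * val i / w 0
        = ((∑ i, w i) / w 0 - 1) * (V - ε) := by
      rw [Finset.sum_congr rfl fun i hi => by rw [hval, if_neg (Finset.ne_of_mem_erase hi)],
        ← Finset.sum_div, ← Finset.sum_mul, Finset.sum_erase_eq_sub (Finset.mem_univ _)]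
      field_simp [(hw 0).ne']
    exact others ▸ hwef.sum_mul_div_le_sum_subsidy_of_single_item hw hs

/-- Lower bound when the allocation can be chosen: with a single item valued V
by agent 0 and V−ε by everyone else, every WEF-able allocation gives the item
to agent 0, and then the total subsidy is at least (W/w₁ − 1)(V−ε). -/
theorem chosen_allocation_subsidy_lower_bound {n : ℕ}
    (w : Fin (n + 2) → ℝ) (hw : ∀ i, 0 < w i) (hmono : Monotone w)
    (V ε : ℝ) (hε : 0 < ε) (hεV : ε < V)
    (val : Fin (n + 2) → ℝ) (hval : ∀ i, val i = if i = 0 then V else V - ε) :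
    (∀ h : Fin (n + 2),
      (∃ s : Fin (n + 2) → ℝ, (∀ i, 0 ≤ s i) ∧
        IsWEF (fun i j => if j = h then val i else 0) w s) → h = 0) ∧
    (∀ s : Fin (n + 2) → ℝ, (∀ i, 0 ≤ s i) →
      IsWEF (fun i j => if j = (0 : Fin (n + 2)) then val i else 0) w s →
      ((∑ i, w i) / w 0 - 1) * (V - ε) ≤ ∑ i, s i) :=
  chosen_allocation_subsidy_lower_bound_general w hw V ε hε val hval
end

section
/- With identical additive valuations, every allocation is weighted-envy-freeable: every directed cycle in the weighted envy graph has total cost exactly 0. -/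
/-!
The edge cost `u j / w j - u i / w i` is a difference of potentials, so it telescopes to 0 around
every cycle. For the subsidies, raise every agent to a common weighted level `M` bounding all
ratios `u k / w k`: agent `k` receives `M * w k - u k ≥ 0`, after which all weighted utilities equal `M`
and nobody envies anybody.
-/

theorem List.sum_map_zip_sub {α β : Type*} [AddCommGroup β] (f : α → β) {l₁ l₂ : List α}
    (h : l₁.length = l₂.length) :
    ((l₁.zip l₂).map fun q => f q.2 - f q.1).sum = (l₂.map f).sum - (l₁.map f).sum := by
  have snd : (l₁.zip l₂).map (fun q => f q.2) = l₂.map f :=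
    List.map_map.symm.trans (congrArg (List.map f) (List.map_snd_zip h.ge))
  have fst : (l₁.zip l₂).map (fun q => f q.1) = l₁.map f :=
    List.map_map.symm.trans (congrArg (List.map f) (List.map_fst_zip h.le))
  rw [← snd, ← fst, ← Multiset.sum_coe, ← Multiset.map_coe, Multiset.sum_map_sub]
  rfl

theorem cycleCost_sub_eq_zero {n : ℕ} (φ : Fin n → ℝ) (c : List (Fin n)) :
    cycleCost (fun i j => φ j - φ i) c = 0 := by
  rw [cycleCost, List.sum_map_zip_sub φ (List.length_rotate c 1).symm,
    ((c.rotate_perm 1).map φ).sum_eq, sub_self]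

noncomputable def levelingSubsidy {n : ℕ} (u w : Fin n → ℝ) (M : ℝ) (k : Fin n) : ℝ :=
  M * w k - u k

section LevelingSubsidy

variable {n : ℕ} {u w : Fin n → ℝ} {M : ℝ}

theorem levelingSubsidy_nonneg {k : Fin n} (hw : 0 < w k) (hM : u k / w k ≤ M) :
    0 ≤ levelingSubsidy u w M k := by
  rw [levelingSubsidy, sub_nonneg]
  exact (div_le_iff₀ hw).mp hM

theorem add_levelingSubsidy_div {k : Fin n} (hw : w k ≠ 0) :
    (u k + levelingSubsidy u w M k) / w k = M := by
  rw [levelingSubsidy, add_sub_cancel, mul_div_assoc, div_self hw, mul_one]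

theorem isWEF_levelingSubsidy (hw : ∀ k, w k ≠ 0) :
    IsWEF (fun _ k => u k) w (levelingSubsidy u w M) := fun i j => by
  rw [add_levelingSubsidy_div (hw i), add_levelingSubsidy_div (hw j)]

end LevelingSubsidy

/-- With identical valuations every allocation is WEF-able:
every directed cycle in the weighted envy graph costs exactly 0. -/
theorem identical_valuations_every_allocation_wefable {n : ℕ}
    (w : Fin n → ℝ) (hw : ∀ i, 0 < w i) (u : Fin n → ℝ) :
    (∀ c : List (Fin n), c ≠ [] →
        cycleCost (envyCost (fun _ k => u k) w) c = 0) ∧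
    (∃ s : Fin n → ℝ, (∀ i, 0 ≤ s i) ∧ IsWEF (fun _ k => u k) w s) := by
  refine ⟨fun c _ => cycleCost_sub_eq_zero (fun k => u k / w k) c, ?_⟩
  obtain ⟨M, hM⟩ := (Set.finite_range fun k => u k / w k).bddAbove
  exact ⟨levelingSubsidy u w M,
    fun k => levelingSubsidy_nonneg (hw k) (hM ⟨k, rfl⟩),
    isWEF_levelingSubsidy fun k => (hw k).ne'⟩
end

section
/- With identical additive valuations, if an allocation A is WEF(0,1), then the maximum path cost satisfies ℓ_i(A) ≤ V/w_i for every agent i, where V is the maximum single-item value; hence the minimal subsidy of each agent is at most w_i·(V/w_i) = V, and the total subsidy is at most (n−1)V. -/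
/-
Under identical valuations the envy cost of the edge `i → j` is the potential difference
`u j / w j - u i / w i`, so every path cost telescopes to a single such difference. WEF(0,1) bounds
each difference by `V / w i`, since giving `i` at most one item of `A j`, worth `≤ V`, removes the
envy. Finally, the agent of largest potential `u / w` has `ℓ ≤ 0`, so only `n` agents contribute.
-/

open Finset

lemma pathCost_sub_eq {n : ℕ} (f : Fin n → ℝ) :
    ∀ (p : List (Fin n)) (hp : p ≠ []),
      pathCost (fun a b => f b - f a) p = f (p.getLast hp) - f (p.head hp)
  | [_], _ => by simp [pathCost]
  | a :: b :: t, _ => by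
    have ih := pathCost_sub_eq f (b :: t) (List.cons_ne_nil b t)
    simp only [pathCost, List.zip_cons_cons, List.tail_cons, List.map_cons,
      List.sum_cons] at ih ⊢
    rw [ih, List.getLast_cons_cons, List.head_cons, List.head_cons]
    ring

lemma exists_eq_sub_of_mem_pathCostsFrom {n : ℕ} {f : Fin n → ℝ} {i : Fin n} {x : ℝ}
    (hx : x ∈ pathCostsFrom (fun a b => f b - f a) i) : ∃ j, x = f j - f i := by
  obtain ⟨p, hp, -, hhead, rfl⟩ := hx
  obtain rfl : p.head hp = i := Option.some_injective _ (List.head?_eq_some_head hp ▸ hhead)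
  exact ⟨p.getLast hp, pathCost_sub_eq f p hp⟩

lemma Finset.sum_le_of_card_le_one {ι : Type*} {s : Finset ι} {g : ι → ℝ} {V : ℝ}
    (hs : s.card ≤ 1) (hV : 0 ≤ V) (hg : ∀ i ∈ s, g i ≤ V) : ∑ i ∈ s, g i ≤ V :=
  calc ∑ i ∈ s, g i ≤ s.card * V := by simpa using sum_le_card_nsmul s g V hg
    _ ≤ 1 * V := by gcongr; exact_mod_cast hs
    _ = V := one_mul V

lemma Finset.sum_le_card_sub_one_mul {ι : Type*} [DecidableEq ι] {s : Finset ι} {g : ι → ℝ}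
    {V : ℝ} {i₀ : ι}
    (hi₀ : i₀ ∈ s) (hg₀ : g i₀ ≤ 0) (hg : ∀ i ∈ s, g i ≤ V) :
    ∑ i ∈ s, g i ≤ (s.card - 1 : ℕ) * V :=
  calc ∑ i ∈ s, g i = g i₀ + ∑ i ∈ s.erase i₀, g i := (add_sum_erase s g hi₀).symm
    _ ≤ 0 + (s.erase i₀).card * V := by
      gcongr
      simpa using sum_le_card_nsmul _ g V fun i hi => hg i (mem_of_mem_erase hi)
    _ = (s.card - 1 : ℕ) * V := by rw [zero_add, card_erase_of_mem hi₀]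

lemma sub_le_of_wef01 {ι : Type*} {m : ℕ} {w : ι → ℝ} {val : Fin m → ℝ} {V : ℝ}
    {A : ι → Finset (Fin m)} {u : ι → ℝ} {i j : ι} (hwi : 0 < w i) (hVpos : 0 ≤ V)
    (hV : ∀ o, val o ≤ V)
    (hWEF01 : ∃ B ⊆ A j, B.card ≤ 1 ∧ u j / w j ≤ (u i + ∑ o ∈ B, val o) / w i) :
    u j / w j - u i / w i ≤ V / w i := by
  obtain ⟨B, -, hcard, hle⟩ := hWEF01
  have hB : ∑ o ∈ B, val o ≤ V := sum_le_of_card_le_one hcard hVpos fun o _ => hV o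
  have : u j / w j ≤ u i / w i + V / w i :=
    calc u j / w j ≤ (u i + ∑ o ∈ B, val o) / w i := hle
      _ ≤ (u i + V) / w i := by gcongr
      _ = u i / w i + V / w i := add_div _ _ _
  linarith

theorem identical_wef01_subsidy_bound_general {n m : ℕ}
    (w : Fin (n + 1) → ℝ) (hw : ∀ i, 0 < w i)
    (val : Fin m → ℝ)
    (V : ℝ) (hVpos : 0 ≤ V) (hV : ∀ o, val o ≤ V)
    (A : Fin (n + 1) → Finset (Fin m))
    (u : Fin (n + 1) → ℝ)
    (hWEF01 : ∀ i j : Fin (n + 1), ∃ B ⊆ A j, B.card ≤ 1 ∧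
      u j / w j ≤ (u i + ∑ o ∈ B, val o) / w i)
    (ℓ : Fin (n + 1) → ℝ)
    (hℓ : ∀ i, IsGreatest (pathCostsFrom (envyCost (fun _ k => u k) w) i) (ℓ i)) :
    (∀ i, ℓ i ≤ V / w i) ∧ (∀ i, w i * ℓ i ≤ V) ∧
      ∑ i, w i * ℓ i ≤ n * V := by
  have hℓ_eq : ∀ i, ∃ j, ℓ i = u j / w j - u i / w i := fun i =>
    exists_eq_sub_of_mem_pathCostsFrom (f := fun k => u k / w k) (hℓ i).1
  have hℓ_le : ∀ i, ℓ i ≤ V / w i := fun i => by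
    obtain ⟨j, hj⟩ := hℓ_eq i
    exact hj ▸ sub_le_of_wef01 (hw i) hVpos hV (hWEF01 i j)
  have hsubsidy_le : ∀ i, w i * ℓ i ≤ V := fun i =>
    (le_div_iff₀' (hw i)).1 (hℓ_le i)
  obtain ⟨i₀, -, hi₀⟩ := exists_max_image univ (fun k => u k / w k) univ_nonempty
  have hℓ₀ : ℓ i₀ ≤ 0 := by
    obtain ⟨j, hj⟩ := hℓ_eq i₀
    linarith [hi₀ j (mem_univ j)]
  refine ⟨hℓ_le, hsubsidy_le, ?_⟩
  simpa using sum_le_card_sub_one_mul (mem_univ i₀)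
    (mul_nonpos_of_nonneg_of_nonpos (hw i₀).le hℓ₀) fun i _ => hsubsidy_le i

/-- With identical additive valuations, a WEF(0,1) allocation has ℓᵢ ≤ V/wᵢ
for every agent, hence a per-agent subsidy of at most V and a total subsidy
of at most (n−1)·V. -/
theorem identical_wef01_subsidy_bound {n m : ℕ}
    (w : Fin (n + 1) → ℝ) (hw : ∀ i, 0 < w i)
    (val : Fin m → ℝ) (h0 : ∀ o, 0 ≤ val o)
    (V : ℝ) (hVpos : 0 ≤ V) (hV : ∀ o, val o ≤ V)
    (A : Fin (n + 1) → Finset (Fin m))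
    (u : Fin (n + 1) → ℝ) (hu : ∀ j, u j = ∑ o ∈ A j, val o)
    (hWEF01 : ∀ i j : Fin (n + 1), ∃ B ⊆ A j, B.card ≤ 1 ∧
      u j / w j ≤ (u i + ∑ o ∈ B, val o) / w i)
    (ℓ : Fin (n + 1) → ℝ)
    (hℓ : ∀ i, IsGreatest (pathCostsFrom (envyCost (fun _ k => u k) w) i) (ℓ i)) :
    (∀ i, ℓ i ≤ V / w i) ∧ (∀ i, w i * ℓ i ≤ V) ∧
      ∑ i, w i * ℓ i ≤ n * V :=
  identical_wef01_subsidy_bound_general w hw val V hVpos hV A u hWEF01 ℓ hℓ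
end

section
/- Lower bound for binary valuations: for n ≥ 2 agents with weights w_1 ≤ w_2 ≤ ... ≤ w_n and a single item valued 1 by agents 1 and 2 and 0 by all others, any weighted-envy-free solution (allocation plus nonnegative subsidies) requires total subsidy at least W/w_2 − 1, where W = Σ_i w_i. -/
/-!
In a WEF solution the item must go to an agent `h ∈ {0, 1}` (a non-holder may not value it more
than the holder). The other agent of `{0, 1}` then envies `h` unless its subsidy per unit weight is
at least `1 / w h`, and non-holders envy each other unless their subsidies per unit weight agree,
so every `i ≠ h` receives at least `w i / w h ≥ w i / w 1`.
-/

/-- `v i j` is agent `i`'s value for the bundle of agent `j`; only `h`'s bundle is nonempty. -/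
def singleItem {m : ℕ} (val : Fin m → ℝ) (h : Fin m) : Fin m → Fin m → ℝ :=
  fun i j => if j = h then val i else 0

namespace IsWEF

variable {m : ℕ} {val w s : Fin m → ℝ} {h i j : Fin m}

theorem singleItem_holder_le (hwef : IsWEF (singleItem val h) w s) (hj : j ≠ h) :
    (val j + s h) / w h ≤ s j / w j := by
  simpa [singleItem, hj] using hwef j h

theorem singleItem_le_of_ne (hwef : IsWEF (singleItem val h) w s) (hi : i ≠ h) (hj : j ≠ h) :
    s j / w j ≤ s i / w i := by
  simpa [singleItem, hi, hj] using hwef i j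

theorem singleItem_le_holder (hwef : IsWEF (singleItem val h) w s) (hj : j ≠ h) :
    s j / w j ≤ (val h + s h) / w h := by
  simpa [singleItem, hj] using hwef h j

theorem singleItem_val_le (hwef : IsWEF (singleItem val h) w s) (hwh : 0 < w h) (hj : j ≠ h) :
    val j ≤ val h := by
  have hle : (val j + s h) / w h ≤ (val h + s h) / w h :=
    (hwef.singleItem_holder_le hj).trans (hwef.singleItem_le_holder hj)
  linarith [(div_le_div_iff_of_pos_right hwh).mp hle]

theorem mul_div_le_singleItem_subsidy (hwef : IsWEF (singleItem val h) w s) (hw : ∀ i, 0 < w i)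
    (hsh : 0 ≤ s h) {k : Fin m} (hk : k ≠ h) (hi : i ≠ h) :
    w i * val k / w h ≤ s i := by
  have hval : val k / w h ≤ s i / w i :=
    calc val k / w h ≤ (val k + s h) / w h := by gcongr <;> linarith [hw h]
      _ ≤ s k / w k := hwef.singleItem_holder_le hk
      _ ≤ s i / w i := hwef.singleItem_le_of_ne hi hk
  rwa [mul_div_assoc, ← le_div_iff₀' (hw i)]

theorem sub_mul_div_le_sum_singleItem_subsidy (hwef : IsWEF (singleItem val h) w s)
    (hw : ∀ i, 0 < w i) (hs : ∀ i, 0 ≤ s i) {k : Fin m} (hk : k ≠ h) :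
    (∑ i, w i - w h) * val k / w h ≤ ∑ i, s i := by
  classical
  calc (∑ i, w i - w h) * val k / w h
      = ∑ i ∈ Finset.univ.erase h, w i * val k / w h := by
        rw [← Finset.sum_erase_eq_sub (Finset.mem_univ h), Finset.sum_mul, Finset.sum_div]
    _ ≤ ∑ i ∈ Finset.univ.erase h, s i :=
        Finset.sum_le_sum fun i hi =>
          hwef.mul_div_le_singleItem_subsidy hw (hs h) hk (Finset.ne_of_mem_erase hi)
    _ ≤ ∑ i, s i := Finset.sum_le_sum_of_subset_of_nonneg (Finset.erase_subset _ _)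
        fun i _ _ => hs i

end IsWEF

/-- Lower bound for binary valuations: with one item valued 1 by agents 0 and 1
(the two smallest-weight agents) and 0 by everyone else, any WEF solution
requires total subsidy at least W/w₂ − 1. -/
theorem binary_lower_bound {n : ℕ}
    (w : Fin (n + 2) → ℝ) (hw : ∀ i, 0 < w i) (hmono : Monotone w)
    (val : Fin (n + 2) → ℝ)
    (hval : ∀ i, val i = if i = 0 ∨ i = 1 then (1 : ℝ) else 0) :
    ∀ h : Fin (n + 2), ∀ s : Fin (n + 2) → ℝ, (∀ i, 0 ≤ s i) →
      IsWEF (fun i j => if j = h then val i else 0) w s →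
      (∑ i, w i) / w 1 - 1 ≤ ∑ i, s i := by
  intro h s hs hwef
  change IsWEF (singleItem val h) w s at hwef
  have hval₀ : val 0 = 1 := by simp [hval]
  have hval₁ : val 1 = 1 := by simp [hval]
  have holder : h = 0 ∨ h = 1 := by
    by_contra hh
    have hvalh : val h = 0 := by rw [hval, if_neg hh]
    have := hwef.singleItem_val_le (hw h) (j := 0) (by tauto)
    linarith
  obtain ⟨k, hk, hvalk⟩ : ∃ k, k ≠ h ∧ val k = 1 := by
    rcases holder with rfl | rfl
    exacts [⟨1, one_ne_zero, hval₁⟩, ⟨0, zero_ne_one, hval₀⟩]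
  have hwh : w h ≤ w 1 := by
    rcases holder with rfl | rfl
    exacts [hmono (Fin.zero_le 1), le_rfl]
  have hW : 0 ≤ ∑ i, w i := Finset.sum_nonneg fun i _ => (hw i).le
  calc (∑ i, w i) / w 1 - 1 ≤ (∑ i, w i) / w h - 1 := by gcongr; exact hw h
    _ = (∑ i, w i - w h) * val k / w h := by rw [hvalk]; field_simp [(hw h).ne']
    _ ≤ ∑ i, s i := hwef.sub_mul_div_le_sum_singleItem_subsidy hw hs hk
end

section
/- For identical additive valuations, the total subsidy lower bound (n−1)V is attained: with integer weights w_1 ≤ ... ≤ w_n and m = 1 + Σ_i (w_i − 1) items each of common value V, any weighted-envy-free solution (allocation of the items plus nonnegative subsidies) requires total subsidy at least (n−1)V. -/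
/-!
With identical valuations, weighted envy-freeness makes the ratio `r = (v(Aᵢ) + sᵢ)/wᵢ` the same
for every agent, so the total subsidy is `r·W` minus the total item value, where `W = ∑ wᵢ`. Since
there is one item more than `∑ (wᵢ - 1)`, some agent `k` receives at least `w_k` items, whence
`r ≥ V`; as the total item value is `(W - n)·V` for `n + 1` agents, the total subsidy is at least
`n·V`.
-/

section Cover

open Function

variable {ι α : Type*} [Fintype ι] [Fintype α] [DecidableEq α]

theorem sum_card_eq_card_of_cover (A : ι → Finset α) (hdisj : Pairwise (Disjoint on A))
    (hcover : ∀ a, ∃ i, a ∈ A i) : ∑ i, (A i).card = Fintype.card α := by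
  rw [← Finset.card_biUnion fun i _ j _ hij => hdisj hij]
  congr
  ext a
  simpa using hcover a

theorem exists_le_card_of_cover (A : ι → Finset α) (hdisj : Pairwise (Disjoint on A))
    (hcover : ∀ a, ∃ i, a ∈ A i) (w : ι → ℕ) (hcard : ∑ i, (w i - 1) < Fintype.card α) :
    ∃ i, w i ≤ (A i).card := by
  rw [← sum_card_eq_card_of_cover A hdisj hcover] at hcard
  obtain ⟨i, -, hi⟩ := Finset.exists_lt_of_sum_lt hcard
  exact ⟨i, by omega⟩

end Cover

theorem IsWEF.div_eq_of_identical {n : ℕ} {u w s : Fin n → ℝ} (h : IsWEF (fun _ j => u j) w s)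
    (i j : Fin n) : (u i + s i) / w i = (u j + s j) / w j :=
  le_antisymm (h j i) (h i j)

theorem sum_eq_mul_sum_sub_of_div_eq {ι : Type*} [Fintype ι] {a s w : ι → ℝ} {r : ℝ}
    (hw : ∀ i, w i ≠ 0) (h : ∀ i, (a i + s i) / w i = r) :
    ∑ i, s i = r * ∑ i, w i - ∑ i, a i := by
  rw [Finset.mul_sum, ← Finset.sum_sub_distrib]
  refine Finset.sum_congr rfl fun i _ => ?_
  rw [← h i, div_mul_cancel₀ _ (hw i)]
  ring

/-- Tightness for identical valuations: with integer weights and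
m = 1 + ∑ (wᵢ − 1) items each of common value V > 0, any weighted-envy-free
solution requires total subsidy at least (n−1)·V. -/
theorem identical_tight_lower_bound {n : ℕ}
    (w : Fin (n + 1) → ℕ) (hw : ∀ i, 1 ≤ w i)
    (V : ℝ) (hV : 0 < V)
    (A : Fin (n + 1) → Finset (Fin (1 + ∑ i, (w i - 1))))
    (hdisj : ∀ i j, i ≠ j → Disjoint (A i) (A j))
    (hcomplete : ∀ o, ∃ i, o ∈ A i)
    (s : Fin (n + 1) → ℝ) (hs : ∀ i, 0 ≤ s i)
    (hWEF : IsWEF (fun _ j => (A j).card * V) (fun i => (w i : ℝ)) s) :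
    (n : ℝ) * V ≤ ∑ i, s i := by
  have hwpos (i : Fin (n + 1)) : (0 : ℝ) < w i := by exact_mod_cast hw i
  set r := ((A 0).card * V + s 0) / (w 0 : ℝ)
  have hr (i : Fin (n + 1)) : ((A i).card * V + s i) / (w i : ℝ) = r :=
    hWEF.div_eq_of_identical (u := fun j => (A j).card * V) i 0
  obtain ⟨k, hk⟩ := exists_le_card_of_cover A hdisj hcomplete w (by simp)
  have hVr : V ≤ r := by
    have hk' : (w k : ℝ) ≤ (A k).card := by exact_mod_cast hk
    rw [← hr k, le_div_iff₀ (hwpos k)]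
    nlinarith [hs k]
  have hitems : ∑ i, ((A i).card : ℝ) + n = ∑ i, (w i : ℝ) := by
    have hcard := sum_card_eq_card_of_cover A hdisj hcomplete
    rw [Fintype.card_fin] at hcard
    have hcast : (∑ i, ((A i).card : ℝ)) = 1 + ∑ i, ((w i : ℝ) - 1) := by
      rw [← Nat.cast_sum, hcard]
      push_cast [Nat.cast_sub (hw _)]
      rfl
    rw [hcast, Finset.sum_sub_distrib]
    simp only [Finset.sum_const, Finset.card_univ, Fintype.card_fin, nsmul_eq_mul, Nat.cast_add,
      Nat.cast_one, mul_one]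
    ring
  have hW : 0 ≤ ∑ i, (w i : ℝ) := Finset.sum_nonneg fun i _ => (hwpos i).le
  rw [sum_eq_mul_sum_sub_of_div_eq (fun i => (hwpos i).ne') hr, ← Finset.sum_mul]
  nlinarith
end
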